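/- arXiv:2311.13511 — 2 statements merged into one kernel-verified Lean document; each statement's English description precedes it below -/
import Mathlib

section
/- For n ≥ 2, a strict M-move in NIM(n,n−1) preserves the nondecreasing order of the entries: if x = (x_1,…,x_n) satisfies x_1 ≤ x_2 ≤ … ≤ x_n and x → x' is the strict M-move (without reordering the entries of x'), then x'_1 ≤ x'_2 ≤ … ≤ x'_n. -/
namespace SlowNim

/-- A legal move in exact slow NIM(n,k): choose exactly `k` piles, each containing
at least one stone, and remove one stone from each chosen pile. -/
def Move (n k : ℕ) (x y : Fin n → ℕ) : Prop :=
  ∃ S : Finset (Fin n), S.card = k ∧ (∀ i ∈ S, 1 ≤ x i) ∧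
    ∀ i, y i = if i ∈ S then x i - 1 else x i

/-- A terminal position: one admitting no legal move. -/
def Terminal (n k : ℕ) (x : Fin n → ℕ) : Prop := ¬ ∃ y, Move n k x y

/-- Specification of the Smith remoteness function for the normal version of NIM(n,k). -/
def NormalSpec (n k : ℕ) (R : (Fin n → ℕ) → ℕ) : Prop :=
  (∀ x, Terminal n k x → R x = 0) ∧
  ∀ x, ¬ Terminal n k x →
    ((∃ y, Move n k x y ∧ Even (R y)) →
      R x = 1 + sInf {r | ∃ y, Move n k x y ∧ Even (R y) ∧ R y = r}) ∧
    ((¬ ∃ y, Move n k x y ∧ Even (R y)) →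
      R x = 1 + sSup {r | ∃ y, Move n k x y ∧ R y = r})

/-- Specification of the Smith remoteness function for the misère version of NIM(n,k). -/
def MisereSpec (n k : ℕ) (R : (Fin n → ℕ) → ℕ) : Prop :=
  (∀ x, Terminal n k x → R x = 0) ∧
  ∀ x, ¬ Terminal n k x →
    ((∃ y, Move n k x y ∧ Odd (R y)) →
      R x = 1 + sInf {r | ∃ y, Move n k x y ∧ Odd (R y) ∧ R y = r}) ∧
    ((¬ ∃ y, Move n k x y ∧ Odd (R y)) →
      R x = 1 + sSup {r | ∃ y, Move n k x y ∧ R y = r})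

/-- `MKeep n x j` holds iff the M-rule for NIM(n,n-1) may keep pile `j` at position `x`:
if all entries are odd, keep an entry of maximal value; otherwise keep an entry of
smallest even value. -/
def MKeep (n : ℕ) (x : Fin n → ℕ) (j : Fin n) : Prop :=
  ((∀ i, Odd (x i)) ∧ ∀ i, x i ≤ x j) ∨
  ((∃ i, Even (x i)) ∧ Even (x j) ∧ ∀ i, Even (x i) → x j ≤ x i)

/-- The position obtained from `x` by keeping pile `j` and reducing every other pile by one. -/
def keepMove (n : ℕ) (x : Fin n → ℕ) (j : Fin n) : Fin n → ℕ :=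
  fun i => if i = j then x i else x i - 1

/-- An M-move in NIM(n,n-1): keep a pile allowed by the M-rule, reduce all others by one. -/
def MMove (n : ℕ) (x y : Fin n → ℕ) : Prop :=
  ∃ j, MKeep n x j ∧ ∀ i, y i = if i = j then x i else x i - 1

/-- The strict M-rule keeps, among all piles eligible for the M-rule, the one of largest index. -/
def StrictMKeep (n : ℕ) (x : Fin n → ℕ) (j : Fin n) : Prop :=
  MKeep n x j ∧ ∀ i, MKeep n x i → i ≤ j

/-- Specification of the set of P-positions of normal play: a position is a P-position
iff every move from it leads to a non-P-position. -/
def NormalPSpec (n k : ℕ) (P : (Fin n → ℕ) → Prop) : Prop :=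
  ∀ x, P x ↔ ∀ y, Move n k x y → ¬ P y

/-- Specification of the positions where the player to move loses in misère play:
terminal positions are wins for the mover, and a non-terminal position is losing
iff every move from it leads to a non-losing position. -/
def MisereLoseSpec (n k : ℕ) (L : (Fin n → ℕ) → Prop) : Prop :=
  ∀ x, L x ↔ (¬ Terminal n k x ∧ ∀ y, Move n k x y → ¬ L y)

/-- A position `x` of misère NIM(m,m-1) is an exception (for the misère remoteness `R`)
if no M-move `x → y` satisfies `R x - R y = 1`. -/
def Exception (m : ℕ) (R : (Fin m → ℕ) → ℕ) (x : Fin m → ℕ) : Prop :=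
  ¬ ∃ y, MMove m x y ∧ R x = R y + 1

/-- `oddUp l` rounds `l` up to an odd number: `f(l) = l` if `l` is odd, `l + 1` otherwise. -/
def oddUp (l : ℕ) : ℕ := if Odd l then l else l + 1

end SlowNim

open SlowNim

/-- For n ≥ 2, a strict M-move in NIM(n,n-1) preserves the nondecreasing order of the
entries: if `x` is nondecreasing and `x'` is obtained from `x` by the strict M-move
(without reordering), then `x'` is nondecreasing. -/
theorem strict_mmove_monotone (n : ℕ) (hn : 2 ≤ n) (x : Fin n → ℕ)
    (hmono : Monotone x) (j : Fin n) (hj : SlowNim.StrictMKeep n x j)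
    (x' : Fin n → ℕ) (hx' : ∀ i, x' i = if i = j then x i else x i - 1) :
    Monotone x' := by
  obtain ⟨hkeep, hmax⟩ := hj
  intro a b hab
  rw [hx' a, hx' b]
  by_cases ha : a = j
  · by_cases hb : b = j
    · simp [ha, hb]
    · subst ha
      rw [if_pos rfl, if_neg hb]
      -- need x j ≤ x b - 1, with j ≤ b, b ≠ j so j < b
      have hjb : a < b := lt_of_le_of_ne hab (Ne.symm hb)
      have hle : x a ≤ x b := hmono hjb.le
      have hne : x a ≠ x b := by
        intro heq
        have hkb : MKeep n x b := by
          rcases hkeep with ⟨hodd, hmx⟩ | ⟨hex, hev, hmin⟩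
          · exact Or.inl ⟨hodd, fun i => heq ▸ hmx i⟩
          · exact Or.inr ⟨hex, heq ▸ hev, fun i hi => heq ▸ hmin i hi⟩
        exact absurd (hmax b hkb) (not_le.mpr hjb)
      omega
  · by_cases hb : b = j
    · simp only [if_neg ha, if_pos hb]
      have : x a ≤ x b := hmono hab
      omega
    · simp only [if_neg ha, if_neg hb]
      have : x a ≤ x b := hmono hab
      omega
end

section
/- Smallest entry equal to 1: let x = (x_1,…,x_m) with x_1 ≤ … ≤ x_m be a position of misère NIM(m,m−1), m ≥ 3, with x_1 = 1. Then x is an exception if and only if x_2 < x_3. -/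
open SlowNim

namespace SlowNimProof
open SlowNim

variable {m : ℕ}

lemma move_iff (hm : 1 ≤ m) (x y : Fin m → ℕ) :
    Move m (m-1) x y ↔ ∃ j : Fin m, (∀ i, i ≠ j → 1 ≤ x i) ∧
      ∀ i, y i = if i = j then x i else x i - 1 := by
  constructor
  · rintro ⟨S, hS, hpos, hy⟩
    have hcard : Sᶜ.card = 1 := by
      rw [Finset.card_compl, hS, Fintype.card_fin]; omega
    obtain ⟨j, hj⟩ := Finset.card_eq_one.mp hcard
    have hmem : ∀ i : Fin m, i ∈ S ↔ i ≠ j := by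
      intro i
      constructor
      · intro h heq
        subst heq
        have hjc : i ∈ Sᶜ := by rw [hj]; exact Finset.mem_singleton_self i
        exact (Finset.mem_compl.mp hjc) h
      · intro h
        by_contra hc
        have hic : i ∈ Sᶜ := Finset.mem_compl.mpr hc
        rw [hj, Finset.mem_singleton] at hic
        exact h hic
    refine ⟨j, fun i hi => hpos i ((hmem i).mpr hi), fun i => ?_⟩
    rw [hy i]
    by_cases h : i = j
    · rw [if_neg (fun hS' => ((hmem i).mp hS') h), if_pos h]
    · rw [if_pos ((hmem i).mpr h), if_neg h]
  · rintro ⟨j, hpos, hy⟩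
    refine ⟨{j}ᶜ, ?_, ?_, ?_⟩
    · rw [Finset.card_compl, Finset.card_singleton, Fintype.card_fin]
    · intro i hi
      exact hpos i (fun h => (Finset.mem_compl.mp hi) (Finset.mem_singleton.mpr h))
    · intro i
      rw [hy i]
      by_cases h : i = j <;> simp [Finset.mem_compl, h]

lemma terminal_iff (hm : 2 ≤ m) (x : Fin m → ℕ) :
    Terminal m (m-1) x ↔ ∃ i j : Fin m, i ≠ j ∧ x i = 0 ∧ x j = 0 := by
  constructor
  · intro h
    have h' : ∀ j : Fin m, ∃ i, i ≠ j ∧ x i = 0 := by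
      intro j
      by_contra hc
      push_neg at hc
      apply h
      refine ⟨_, (move_iff (by omega) x _).mpr ⟨j, ?_, fun i => rfl⟩⟩
      intro i hi
      have := hc i hi
      omega
    obtain ⟨i, hij, hi⟩ := h' ⟨0, by omega⟩
    obtain ⟨i', hij', hi'⟩ := h' i
    exact ⟨i', i, hij', hi', hi⟩
  · rintro ⟨i, j, hij, hi, hj⟩ ⟨y, hy⟩
    obtain ⟨k, hpos, -⟩ := (move_iff (by omega) x y).mp hy
    by_cases hik : i = k
    · have : j ≠ k := fun h => hij (h ▸ hik ▸ rfl)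
      have := hpos j this
      omega
    · have := hpos i hik
      omega




lemma R_forced (hm : 2 ≤ m) (R : (Fin m → ℕ) → ℕ) (hR : MisereSpec m (m-1) R) :
    ∀ (n : ℕ) (x : Fin m → ℕ) (i0 : Fin m), x i0 = 0 →
      (∃ i1, i1 ≠ i0 ∧ x i1 = n) → (∀ i, i ≠ i0 → n ≤ x i) → R x = n := by
  intro n
  induction n with
  | zero =>
    rintro x i0 h0 ⟨i1, hne, h1⟩ -
    exact hR.1 x ((terminal_iff hm x).mpr ⟨i1, i0, hne, h1, h0⟩)
  | succ n ih =>
    rintro x i0 h0 ⟨i1, hne, h1⟩ hmin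
    set y : Fin m → ℕ := fun i => if i = i0 then x i else x i - 1 with hy
    have hnt : ¬ Terminal m (m-1) x := by
      rw [terminal_iff hm]
      rintro ⟨i, j, hij, hi, hj⟩
      by_cases h : i = i0
      · subst h
        have hji : j ≠ i := fun e => hij e.symm
        have := hmin j hji
        omega
      · have := hmin i h
        omega
    have hmove : Move m (m-1) x y := by
      refine (move_iff (by omega) x y).mpr ⟨i0, fun i hi => ?_, fun i => rfl⟩
      have := hmin i hi
      omega
    have huniq : ∀ y', Move m (m-1) x y' → y' = y := by
      rintro y' hy'
      obtain ⟨j, hpos, hval⟩ := (move_iff (by omega) x y').mp hy'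
      have hj : j = i0 := by
        by_contra h
        have := hpos i0 (fun e => h e.symm)
        omega
      subst hj
      funext i
      rw [hval i]
    have hRy : R y = n := by
      refine ih y i0 (by simp only [hy, if_pos rfl]; exact h0) ⟨i1, hne, ?_⟩ (fun i hi => ?_)
      · simp only [hy, if_neg hne]
        omega
      · simp only [hy, if_neg hi]
        have := hmin i hi
        omega
    obtain ⟨ho, he⟩ := hR.2 x hnt
    rcases Nat.even_or_odd n with hev | hod
    · have hno : ¬ ∃ y', Move m (m-1) x y' ∧ Odd (R y') := by
        rintro ⟨y', hm', hodd⟩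
        rw [huniq y' hm', hRy] at hodd
        exact (Nat.not_odd_iff_even.mpr hev) hodd
      rw [he hno]
      have hset : {r | ∃ y', Move m (m-1) x y' ∧ R y' = r} = {n} := by
        ext r
        simp only [Set.mem_setOf_eq, Set.mem_singleton_iff]
        constructor
        · rintro ⟨y', hm', hr⟩
          rw [huniq y' hm', hRy] at hr
          omega
        · rintro rfl
          exact ⟨y, hmove, hRy⟩
      rw [hset, csSup_singleton]; omega
    · rw [ho ⟨y, hmove, hRy ▸ hod⟩]
      have hset : {r | ∃ y', Move m (m-1) x y' ∧ Odd (R y') ∧ R y' = r} = {n} := by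
        ext r
        simp only [Set.mem_setOf_eq, Set.mem_singleton_iff]
        constructor
        · rintro ⟨y', hm', -, hr⟩
          rw [huniq y' hm', hRy] at hr
          omega
        · rintro rfl
          exact ⟨y, hmove, hRy ▸ hod, hRy⟩
      rw [hset, csInf_singleton]; omega


lemma R_keep_big (hm3 : 3 ≤ m) (i0 i1 : Fin m) (e0 : i0.val = 0) (e1 : i1.val = 1)
    (R : (Fin m → ℕ) → ℕ) (hR : MisereSpec m (m-1) R)
    (x : Fin m → ℕ) (hx : Monotone x) (h1 : x i0 = 1)
    (j : Fin m) (hj : 2 ≤ j.val) :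
    R (keepMove m x j) = x i1 - 1 := by
  have hmono : ∀ p q : Fin m, p.val ≤ q.val → x p ≤ x q := fun p q h => hx h
  refine R_forced (by omega) R hR (x i1 - 1) (keepMove m x j) i0 ?_ ⟨i1, ?_, ?_⟩ ?_
  · show (if i0 = j then x i0 else x i0 - 1) = 0
    rw [if_neg (fun e => by rw [e] at e0; omega), h1]
  · exact fun e => by rw [e] at e1; omega
  · show (if i1 = j then x i1 else x i1 - 1) = x i1 - 1
    rw [if_neg (fun e => by rw [e] at e1; omega)]
  · intro i hi
    have hival : i.val ≠ 0 := fun h => hi (Fin.ext (by omega))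
    have hxi : x i1 ≤ x i := hmono _ _ (by omega)
    show x i1 - 1 ≤ if i = j then x i else x i - 1
    split <;> omega

lemma R_keep_one (hm3 : 3 ≤ m) (i0 i1 i2 : Fin m)
    (e0 : i0.val = 0) (e1 : i1.val = 1) (e2 : i2.val = 2)
    (R : (Fin m → ℕ) → ℕ) (hR : MisereSpec m (m-1) R)
    (x : Fin m → ℕ) (hx : Monotone x) (h1 : x i0 = 1) :
    R (keepMove m x i1) = if x i1 = x i2 then x i1 - 1 else x i1 := by
  have hmono : ∀ p q : Fin m, p.val ≤ q.val → x p ≤ x q := fun p q h => hx h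
  have hab : x i1 ≤ x i2 := hmono _ _ (by omega)
  refine R_forced (by omega) R hR _ (keepMove m x i1) i0 ?_ ?_ ?_
  · show (if i0 = i1 then x i0 else x i0 - 1) = 0
    rw [if_neg (fun e => by rw [e] at e0; omega), h1]
  · by_cases h : x i1 = x i2
    · refine ⟨i2, fun e => by rw [e] at e2; omega, ?_⟩
      show (if i2 = i1 then x i2 else x i2 - 1) = _
      rw [if_neg (fun e => by rw [e] at e2; omega), if_pos h, h]
    · refine ⟨i1, fun e => by rw [e] at e1; omega, ?_⟩
      show (if i1 = i1 then x i1 else x i1 - 1) = _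
      rw [if_pos rfl, if_neg h]
  · intro i hi
    have hival : i.val ≠ 0 := fun h => hi (Fin.ext (by omega))
    show (if x i1 = x i2 then x i1 - 1 else x i1) ≤ if i = i1 then x i else x i - 1
    by_cases hi1 : i = i1
    · rw [if_pos hi1, hi1]
      split <;> omega
    · have hival2 : 2 ≤ i.val := by
        rcases Nat.lt_or_ge i.val 2 with h | h
        · exfalso; exact hi1 (Fin.ext (by omega))
        · exact h
      have hxi : x i2 ≤ x i := hmono _ _ (by omega)
      rw [if_neg hi1]
      split <;> omega
lemma R_main (hm3 : 3 ≤ m) (i0 i1 i2 : Fin m)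
    (e0 : i0.val = 0) (e1 : i1.val = 1) (e2 : i2.val = 2)
    (R : (Fin m → ℕ) → ℕ) (hR : MisereSpec m (m-1) R) :
    ∀ (a : ℕ) (x : Fin m → ℕ), Monotone x → x i0 = 1 → x i1 = a →
      R x = if x i1 = x i2 ∨ Even a then a else a + 1 := by
  intro a
  induction a using Nat.strong_induction_on with
  | _ a ih =>
  intro x hx h1 ha
  have hmono : ∀ p q : Fin m, p.val ≤ q.val → x p ≤ x q := fun p q h => hx h
  have hpos : ∀ i, 1 ≤ x i := fun i => by have := hmono i0 i (by omega); omega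
  have ha1 : 1 ≤ a := by have := hmono i0 i1 (by omega); omega
  have hab : a ≤ x i2 := by have := hmono i1 i2 (by omega); omega
  rw [ha]
  set b := x i2 with hbdef
  set z : Fin m → ℕ := keepMove m x i0 with hzdef
  have hz0 : z i0 = 1 := by
    show (if i0 = i0 then x i0 else x i0 - 1) = 1
    rw [if_pos rfl, h1]
  have hz1 : z i1 = a - 1 := by
    show (if i1 = i0 then x i1 else x i1 - 1) = a - 1
    rw [if_neg (fun e => by rw [e] at e1; omega), ha]
  have hz2 : z i2 = b - 1 := by
    show (if i2 = i0 then x i2 else x i2 - 1) = b - 1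
    rw [if_neg (fun e => by rw [e] at e2; omega), ← hbdef]
  have hmove_iff : ∀ y, Move m (m-1) x y ↔ ∃ j, y = keepMove m x j := by
    intro y
    rw [move_iff (by omega)]
    constructor
    · rintro ⟨j, -, hval⟩
      exact ⟨j, funext fun i => hval i⟩
    · rintro ⟨j, rfl⟩
      exact ⟨j, fun i _ => hpos i, fun i => rfl⟩
  have hnt : ¬ Terminal m (m-1) x := by
    rw [terminal_iff (by omega)]
    rintro ⟨i, j, -, hi, -⟩
    have := hpos i
    omega
  have hmv : ∀ j : Fin m, Move m (m-1) x (keepMove m x j) :=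
    fun j => (hmove_iff _).mpr ⟨j, rfl⟩
  have hbig : ∀ j : Fin m, 2 ≤ j.val → R (keepMove m x j) = a - 1 := by
    intro j hj
    rw [R_keep_big hm3 i0 i1 e0 e1 R hR x hx h1 j hj, ha]
  have hone : R (keepMove m x i1) = if a = b then a - 1 else a := by
    have h := R_keep_one hm3 i0 i1 i2 e0 e1 e2 R hR x hx h1
    rw [ha, ← hbdef] at h
    exact h
  -- value of R z
  have hzABC : (a = b → R z = a - 1) ∧ (a ≠ b → Even a → R z = a) ∧
      (a ≠ b → Odd a → R z = a ∨ R z = a - 1) := by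
    by_cases ha1' : a = 1
    · by_cases hb1 : b = 1
      · have hz : R z = 0 :=
          R_forced (by omega) R hR 0 z i1 (by rw [hz1, ha1'])
            ⟨i2, fun e => by rw [e] at e2; omega, by rw [hz2, hb1]⟩
            (fun i _ => Nat.zero_le _)
        exact ⟨fun _ => by rw [hz]; omega, fun h _ => (h (by omega)).elim,
          fun h _ => (h (by omega)).elim⟩
      · have hz : R z = 1 := by
          refine R_forced (by omega) R hR 1 z i1 (by rw [hz1, ha1'])
            ⟨i0, fun e => by rw [e] at e0; omega, hz0⟩ ?_
          intro i hi
          by_cases hii0 : i = i0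
          · rw [hii0, hz0]
          · have hiv0 : i.val ≠ 0 := fun h => hii0 (Fin.ext (by omega))
            have hiv1 : i.val ≠ 1 := fun h => hi (Fin.ext (by omega))
            have hxi : x i2 ≤ x i := hmono i2 i (by omega)
            show 1 ≤ if i = i0 then x i else x i - 1
            rw [if_neg hii0]
            omega
        refine ⟨fun h => by omega, fun _ hev => ?_, fun _ _ => Or.inl (by rw [hz]; omega)⟩
        · rw [Nat.even_iff] at hev
          omega
    · have ha2 : 2 ≤ a := by omega
      have hzmono : Monotone z := by
        intro p q hpq
        have hv : p.val ≤ q.val := hpq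
        by_cases hp : p = i0
        · rw [hp, hz0]
          by_cases hq : q = i0
          · rw [hq, hz0]
          · have hqv : q.val ≠ 0 := fun h => hq (Fin.ext (by omega))
            show 1 ≤ if q = i0 then x q else x q - 1
            rw [if_neg hq]
            have := hmono i1 q (by omega)
            omega
        · have hpv : p.val ≠ 0 := fun h => hp (Fin.ext (by omega))
          have hq : q ≠ i0 := fun h => by rw [h] at hv; omega
          show (if p = i0 then x p else x p - 1) ≤ if q = i0 then x q else x q - 1
          rw [if_neg hp, if_neg hq]
          have := hmono p q hv
          omega
      have hz := ih (a-1) (by omega) z hzmono hz0 hz1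
      rw [hz1, hz2] at hz
      refine ⟨fun h => ?_, fun h hev => ?_, fun h hod => ?_⟩
      · rw [hz, if_pos (Or.inl (by omega))]
      · rw [hz, if_neg ?_]
        · omega
        · rw [not_or]
          refine ⟨by omega, ?_⟩
          rw [Nat.even_iff] at hev ⊢
          omega
      · refine Or.inr ?_
        rw [hz, if_pos (Or.inr ?_)]
        rw [Nat.even_iff]
        have := Nat.odd_iff.mp hod
        omega
  obtain ⟨hzA, hzB, hzC⟩ := hzABC
  have hvals : ∀ y, Move m (m-1) x y →
      R y = R z ∨ R y = (if a = b then a - 1 else a) ∨ R y = a - 1 := by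
    intro y hy
    obtain ⟨j, rfl⟩ := (hmove_iff y).mp hy
    rcases Nat.lt_or_ge j.val 2 with hj | hj
    · rcases Nat.lt_or_ge j.val 1 with hj0 | hj1
      · left
        rw [show j = i0 from Fin.ext (by omega), ← hzdef]
      · right; left
        rw [show j = i1 from Fin.ext (by omega), hone]
    · right; right
      exact hbig j hj
  obtain ⟨ho, he⟩ := hR.2 x hnt
  by_cases hab' : a = b
  · have hall : ∀ y, Move m (m-1) x y → R y = a - 1 := by
      intro y hy
      rcases hvals y hy with h | h | h
      · rw [h]; exact hzA hab'
      · rw [h, if_pos hab']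
      · exact h
    rcases Nat.even_or_odd a with hev | hod
    · have hodd1 : Odd (a - 1) := by
        rw [Nat.odd_iff]
        rw [Nat.even_iff] at hev
        omega
      rw [ho ⟨keepMove m x i2, hmv i2, by rw [hbig i2 (by omega)]; exact hodd1⟩]
      have hset : {r | ∃ y, Move m (m-1) x y ∧ Odd (R y) ∧ R y = r} = {a - 1} := by
        ext r
        simp only [Set.mem_setOf_eq, Set.mem_singleton_iff]
        constructor
        · rintro ⟨y, hy, -, hr⟩
          rw [← hr, hall y hy]
        · rintro rfl
          exact ⟨keepMove m x i2, hmv i2, by rw [hbig i2 (by omega)]; exact hodd1,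
            hbig i2 (by omega)⟩
      rw [hset, csInf_singleton, if_pos (Or.inl hab')]
      omega
    · have hno : ¬ ∃ y, Move m (m-1) x y ∧ Odd (R y) := by
        rintro ⟨y, hy, hodd⟩
        rw [hall y hy, Nat.odd_iff] at hodd
        have := Nat.odd_iff.mp hod
        omega
      rw [he hno]
      have hset : {r | ∃ y, Move m (m-1) x y ∧ R y = r} = {a - 1} := by
        ext r
        simp only [Set.mem_setOf_eq, Set.mem_singleton_iff]
        constructor
        · rintro ⟨y, hy, hr⟩
          rw [← hr, hall y hy]
        · rintro rfl
          exact ⟨keepMove m x i2, hmv i2, hbig i2 (by omega)⟩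
      rw [hset, csSup_singleton, if_pos (Or.inl hab')]
      omega
  · rcases Nat.even_or_odd a with hev | hod
    · have ha2 : 2 ≤ a := by
        rw [Nat.even_iff] at hev
        omega
      have hz : R z = a := hzB hab' hev
      have hodd1 : Odd (a - 1) := by
        rw [Nat.odd_iff]
        rw [Nat.even_iff] at hev
        omega
      rw [ho ⟨keepMove m x i2, hmv i2, by rw [hbig i2 (by omega)]; exact hodd1⟩]
      have hset : {r | ∃ y, Move m (m-1) x y ∧ Odd (R y) ∧ R y = r} = {a - 1} := by
        ext r
        simp only [Set.mem_setOf_eq, Set.mem_singleton_iff]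
        constructor
        · rintro ⟨y, hy, hodd, hr⟩
          have hy' := hvals y hy
          rw [hz, if_neg hab'] at hy'
          have hoddm := Nat.odd_iff.mp hodd
          have hevm := Nat.even_iff.mp hev
          rcases hy' with h | h | h <;> omega
        · rintro rfl
          exact ⟨keepMove m x i2, hmv i2, by rw [hbig i2 (by omega)]; exact hodd1,
            hbig i2 (by omega)⟩
      rw [hset, csInf_singleton, if_pos (Or.inr hev)]
      omega
    · have hnotev : ¬ Even a := by
        rw [Nat.even_iff]
        have := Nat.odd_iff.mp hod
        omega
      rw [ho ⟨keepMove m x i1, hmv i1, by rw [hone, if_neg hab']; exact hod⟩]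
      have hset : {r | ∃ y, Move m (m-1) x y ∧ Odd (R y) ∧ R y = r} = {a} := by
        ext r
        simp only [Set.mem_setOf_eq, Set.mem_singleton_iff]
        constructor
        · rintro ⟨y, hy, hodd, hr⟩
          have hy' := hvals y hy
          rw [if_neg hab'] at hy'
          have hoddm := Nat.odd_iff.mp hodd
          have hodda := Nat.odd_iff.mp hod
          rcases hy' with h | h | h
          · rcases hzC hab' hod with hc | hc <;> omega
          · omega
          · omega
        · rintro rfl
          exact ⟨keepMove m x i1, hmv i1, by rw [hone, if_neg hab']; exact hod,
            by rw [hone, if_neg hab']⟩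
      rw [hset, csInf_singleton, if_neg (by rw [not_or]; exact ⟨hab', hnotev⟩)]
      omega
lemma exception_main (hm3 : 3 ≤ m) (i0 i1 i2 : Fin m)
    (e0 : i0.val = 0) (e1 : i1.val = 1) (e2 : i2.val = 2)
    (x : Fin m → ℕ) (hx : Monotone x)
    (R : (Fin m → ℕ) → ℕ) (hR : MisereSpec m (m-1) R) (h1 : x i0 = 1) :
    Exception m R x ↔ x i1 < x i2 := by
  have hmono : ∀ p q : Fin m, p.val ≤ q.val → x p ≤ x q := fun p q h => hx h
  have ha1 : 1 ≤ x i1 := by have := hmono i0 i1 (by omega); omega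
  have hab : x i1 ≤ x i2 := hmono i1 i2 (by omega)
  have hRx : R x = if x i1 = x i2 ∨ Even (x i1) then x i1 else x i1 + 1 :=
    R_main hm3 i0 i1 i2 e0 e1 e2 R hR (x i1) x hx h1 rfl
  have hbig : ∀ j : Fin m, 2 ≤ j.val → R (keepMove m x j) = x i1 - 1 :=
    fun j hj => R_keep_big hm3 i0 i1 e0 e1 R hR x hx h1 j hj
  have hone : R (keepMove m x i1) = if x i1 = x i2 then x i1 - 1 else x i1 :=
    R_keep_one hm3 i0 i1 i2 e0 e1 e2 R hR x hx h1
  constructor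
  · intro hexc
    by_contra hnlt
    have hab' : x i1 = x i2 := by omega
    apply hexc
    by_cases hall : ∀ i, Odd (x i)
    · refine ⟨keepMove m x ⟨m-1, by omega⟩,
        ⟨⟨m-1, by omega⟩, Or.inl ⟨hall, fun i => hmono i _ ?_⟩, fun i => rfl⟩, ?_⟩
      · show i.val ≤ m - 1
        have := i.isLt
        omega
      · rw [hbig ⟨m-1, by omega⟩ (by show 2 ≤ m - 1; omega), hRx, if_pos (Or.inl hab')]
        omega
    · push_neg at hall
      obtain ⟨iw, hiw⟩ := hall
      have hiwe : Even (x iw) := Nat.not_odd_iff_even.mp hiw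
      obtain ⟨j, hjT, hjmin⟩ := Finset.exists_min_image
        (Finset.univ.filter fun i => Even (x i)) x
        ⟨iw, Finset.mem_filter.mpr ⟨Finset.mem_univ _, hiwe⟩⟩
      have hje : Even (x j) := (Finset.mem_filter.mp hjT).2
      have hkeep : MKeep m x j := Or.inr ⟨⟨iw, hiwe⟩, hje,
        fun i hie => hjmin i (Finset.mem_filter.mpr ⟨Finset.mem_univ _, hie⟩)⟩
      have hjv : j.val ≠ 0 := by
        intro h
        rw [show j = i0 from Fin.ext (by omega), h1, Nat.even_iff] at hje
        omega
      have hRj : R (keepMove m x j) = x i1 - 1 := by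
        rcases Nat.lt_or_ge j.val 2 with h2 | h2
        · rw [show j = i1 from Fin.ext (by omega), hone, if_pos hab']
        · exact hbig j h2
      exact ⟨keepMove m x j, ⟨j, hkeep, fun i => rfl⟩,
        by rw [hRj, hRx, if_pos (Or.inl hab')]; omega⟩
  · intro hlt
    rintro ⟨y, ⟨j, hkeep, hyval⟩, hReq⟩
    have hy : y = keepMove m x j := funext fun i => hyval i
    have hab' : x i1 ≠ x i2 := by omega
    rcases Nat.even_or_odd (x i1) with hev | hod
    · have hj1 : j = i1 := by
        rcases hkeep with ⟨hallodd, -⟩ | ⟨-, hje, hjmin⟩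
        · have := Nat.odd_iff.mp (hallodd i1)
          have := Nat.even_iff.mp hev
          omega
        · have hja : x j ≤ x i1 := hjmin i1 hev
          have hjv0 : j.val ≠ 0 := by
            intro h
            rw [show j = i0 from Fin.ext (by omega), h1, Nat.even_iff] at hje
            omega
          by_contra hne
          have hjv1 : j.val ≠ 1 := fun h => hne (Fin.ext (by omega))
          have : x i2 ≤ x j := hmono i2 j (by omega)
          omega
      rw [hy, hj1, hone, if_neg hab'] at hReq
      rw [hRx, if_pos (Or.inr hev)] at hReq
      omega
    · have hj2 : 2 ≤ j.val := by
        rcases hkeep with ⟨hallodd, hmax⟩ | ⟨-, hje, hjmin⟩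
        · have h2 : x i2 ≤ x j := hmax i2
          by_contra hlt2
          rcases Nat.lt_or_ge j.val 1 with h0 | h1'
          · rw [show j = i0 from Fin.ext (by omega), h1] at h2
            omega
          · rw [show j = i1 from Fin.ext (by omega)] at h2
            omega
        · have hjv0 : j.val ≠ 0 := by
            intro h
            rw [show j = i0 from Fin.ext (by omega), h1, Nat.even_iff] at hje
            omega
          have hjv1 : j.val ≠ 1 := by
            intro h
            rw [show j = i1 from Fin.ext (by omega), Nat.even_iff] at hje
            have := Nat.odd_iff.mp hod
            omega
          omega
      rw [hy, hbig j hj2] at hReq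
      rw [hRx, if_neg (by
        rw [not_or]
        refine ⟨hab', ?_⟩
        rw [Nat.even_iff]
        have := Nat.odd_iff.mp hod
        omega)] at hReq
      omega

end SlowNimProof

/-- Smallest entry equal to 1: a nondecreasing position `x` of misère NIM(m,m-1),
m ≥ 3, with `x₁ = 1` is an exception iff `x₂ < x₃`. (Indices are 1-based in the
informal statement, 0-based here.) -/
theorem exception_iff_min_one (m : ℕ) (hm : 3 ≤ m) (x : Fin m → ℕ) (hx : Monotone x)
    (R : (Fin m → ℕ) → ℕ) (hR : SlowNim.MisereSpec m (m - 1) R)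
    (h1 : x ⟨0, by omega⟩ = 1) :
    SlowNim.Exception m R x ↔ x ⟨1, by omega⟩ < x ⟨2, by omega⟩ :=
  SlowNimProof.exception_main hm ⟨0, by omega⟩ ⟨1, by omega⟩ ⟨2, by omega⟩
    rfl rfl rfl x hx R hR h1
end
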